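/- Adding a moment constraint tightens the square-root bound: if Y⁺ = (Y₁,...,Y_d) extends Y = (Y₁,...,Y_{d-1}) and Σ_μ(X,Y⁺) is invertible, then det(Σ_μ(X,Y⁺))/det(Σ_μ(Y⁺)) ≤ det(Σ_μ(X,Y))/det(Σ_μ(Y)), with equality if and only if Cov_μ(X,Y_d) = Cov_μ(X,Y) Σ_μ(Y)⁻¹ Cov_μ(Y,Y_d). -/

import Mathlib

open MeasureTheory Matrix

/-- The covariance of two real random variables under `μ`. -/
noncomputable def covar {Ω : Type*} [MeasurableSpace Ω] (μ : Measure Ω) (f g : Ω → ℝ) : ℝ :=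
  ∫ ω, (f ω - ∫ x, f x ∂μ) * (g ω - ∫ x, g x ∂μ) ∂μ

/-! The ratio `det Σ(X,Z) / det Σ(Z)` is the Schur complement `Var X - cᵀ Σ(Z)⁻¹ c`, where
`c = Cov(X,Z)`, and `cᵀ Σ(Z)⁻¹ c` is the maximum over `a` of `2 aᵀc - aᵀ Σ(Z) a`, the gap at
`a` being the squared `Σ(Z)`-norm of `a - Σ(Z)⁻¹ c`. For `Z = Y⁺`, evaluating at
`a = (Σ(Y)⁻¹ Cov(X,Y), 0)` gives the value of the maximum for `Z = Y`, so the Schur complement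
can only drop, and it stays the same iff this `a` solves `Σ(Y⁺) a = Cov(X,Y⁺)`; the first `d - 1`
of these equations hold by construction and the last one is the stated covariance identity.
Being positive semidefinite and invertible, `Σ(X,Y⁺)` is positive definite, hence so are its
principal submatrices `Σ(Y⁺)` and `Σ(Y)`, and all these inverses exist. -/

namespace Matrix

section CommRing

variable {R m : Type*} [CommRing R] [Fintype m]

lemma IsSymm.dotProduct_mulVec_comm {A : Matrix m m R} (hA : A.IsSymm) (v w : m → R) :
    v ⬝ᵥ A *ᵥ w = w ⬝ᵥ A *ᵥ v := by
  rw [dotProduct_mulVec, ← mulVec_transpose, hA.eq, dotProduct_comm]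

variable [DecidableEq m]

lemma mulVec_inv_mulVec_of_isUnit_det {A : Matrix m m R} (h : IsUnit A.det) (v : m → R) :
    A *ᵥ (A⁻¹ *ᵥ v) = v := by
  rw [mulVec_mulVec, mul_nonsing_inv _ h, one_mulVec]

lemma IsSymm.dotProduct_mulVec_sub_inv_mulVec {A : Matrix m m R} (hA : A.IsSymm)
    (h : IsUnit A.det) (a c : m → R) :
    (a - A⁻¹ *ᵥ c) ⬝ᵥ A *ᵥ (a - A⁻¹ *ᵥ c)
      = c ⬝ᵥ A⁻¹ *ᵥ c - (2 * (a ⬝ᵥ c) - a ⬝ᵥ A *ᵥ a) := by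
  rw [mulVec_sub, mulVec_inv_mulVec_of_isUnit_det h, sub_dotProduct, dotProduct_sub,
    dotProduct_sub, hA.dotProduct_mulVec_comm (A⁻¹ *ᵥ c) a, mulVec_inv_mulVec_of_isUnit_det h,
    dotProduct_comm (A⁻¹ *ᵥ c) c]
  ring

end CommRing

section Snoc

variable {R : Type*} [CommRing R] {n : ℕ}

lemma snoc_zero_dotProduct (u : Fin n → R) (v : Fin (n + 1) → R) :
    Fin.snoc u 0 ⬝ᵥ v = u ⬝ᵥ Fin.init v := by
  simp [dotProduct, Fin.sum_univ_castSucc, Fin.init]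

lemma mulVec_snoc_zero {m : Type*} (A : Matrix m (Fin (n + 1)) R) (u : Fin n → R) :
    A *ᵥ Fin.snoc u 0 = A.submatrix id Fin.castSucc *ᵥ u := by
  ext i
  simp [mulVec, dotProduct, Fin.sum_univ_castSucc]

lemma two_mul_snoc_dotProduct_sub_eq (A : Matrix (Fin (n + 1)) (Fin (n + 1)) R)
    {u : Fin n → R} {c : Fin (n + 1) → R}
    (hu : A.submatrix Fin.castSucc Fin.castSucc *ᵥ u = Fin.init c) :
    2 * (Fin.snoc u 0 ⬝ᵥ c) - Fin.snoc u 0 ⬝ᵥ A *ᵥ Fin.snoc u 0 = u ⬝ᵥ Fin.init c := by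
  have hinit : Fin.init (A *ᵥ Fin.snoc u 0) = A.submatrix Fin.castSucc Fin.castSucc *ᵥ u := by
    rw [mulVec_snoc_zero]; rfl
  rw [snoc_zero_dotProduct, snoc_zero_dotProduct, hinit, hu]
  ring

end Snoc

section PosDef

variable {m : Type*} [Fintype m] [DecidableEq m]

lemma PosDef.isUnit_det {A : Matrix m m ℝ} (hA : A.PosDef) : IsUnit A.det :=
  (isUnit_iff_isUnit_det A).mp hA.isUnit

lemma PosDef.two_mul_dotProduct_sub_le {A : Matrix m m ℝ} (hA : A.PosDef) (a c : m → ℝ) :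
    2 * (a ⬝ᵥ c) - a ⬝ᵥ A *ᵥ a ≤ c ⬝ᵥ A⁻¹ *ᵥ c := by
  have hgap := hA.posSemidef.dotProduct_mulVec_nonneg (a - A⁻¹ *ᵥ c)
  rw [star_trivial, (isHermitian_iff_isSymm.mp hA.isHermitian).dotProduct_mulVec_sub_inv_mulVec
    hA.isUnit_det] at hgap
  linarith

lemma PosDef.two_mul_dotProduct_sub_eq_iff {A : Matrix m m ℝ} (hA : A.PosDef) (a c : m → ℝ) :
    2 * (a ⬝ᵥ c) - a ⬝ᵥ A *ᵥ a = c ⬝ᵥ A⁻¹ *ᵥ c ↔ A *ᵥ a = c := by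
  have hgap := hA.posSemidef.dotProduct_mulVec_zero_iff (a - A⁻¹ *ᵥ c)
  rwa [star_trivial, (isHermitian_iff_isSymm.mp hA.isHermitian).dotProduct_mulVec_sub_inv_mulVec
    hA.isUnit_det, sub_eq_zero, eq_comm, mulVec_sub, mulVec_inv_mulVec_of_isUnit_det hA.isUnit_det,
    sub_eq_zero] at hgap

variable {n : ℕ} {A : Matrix (Fin (n + 1)) (Fin (n + 1)) ℝ}

lemma PosDef.init_dotProduct_inv_mulVec_init_le (hA : A.PosDef) (c : Fin (n + 1) → ℝ) :
    Fin.init c ⬝ᵥ (A.submatrix Fin.castSucc Fin.castSucc)⁻¹ *ᵥ Fin.init c ≤ c ⬝ᵥ A⁻¹ *ᵥ c := by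
  have hu := mulVec_inv_mulVec_of_isUnit_det
    (hA.submatrix (Fin.castSucc_injective n)).isUnit_det (Fin.init c)
  rw [dotProduct_comm, ← two_mul_snoc_dotProduct_sub_eq A hu]
  exact hA.two_mul_dotProduct_sub_le _ c

lemma PosDef.init_dotProduct_inv_mulVec_init_eq_iff (hA : A.PosDef) (c : Fin (n + 1) → ℝ) :
    Fin.init c ⬝ᵥ (A.submatrix Fin.castSucc Fin.castSucc)⁻¹ *ᵥ Fin.init c = c ⬝ᵥ A⁻¹ *ᵥ c ↔
      c (Fin.last n) = Fin.init c ⬝ᵥ (A.submatrix Fin.castSucc Fin.castSucc)⁻¹ *ᵥ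
        fun i => A i.castSucc (Fin.last n) := by
  have hu := mulVec_inv_mulVec_of_isUnit_det
    (hA.submatrix (Fin.castSucc_injective n)).isUnit_det (Fin.init c)
  have hsymm := isHermitian_iff_isSymm.mp hA.isHermitian
  have hrow : (fun j : Fin n => A (Fin.last n) j.castSucc) = fun i => A i.castSucc (Fin.last n) :=
    funext fun j => hsymm.apply _ _
  rw [dotProduct_comm, ← two_mul_snoc_dotProduct_sub_eq A hu, hA.two_mul_dotProduct_sub_eq_iff,
    funext_iff, Fin.forall_fin_succ', mulVec_snoc_zero, eq_comm (a := c (Fin.last n))]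
  refine (and_iff_right fun i => congrFun hu i).trans ?_
  change (fun j : Fin n => A (Fin.last n) j.castSucc) ⬝ᵥ _ = _ ↔ _
  rw [hrow, (hsymm.submatrix _).inv.dotProduct_mulVec_comm]

end PosDef

lemma det_div_det_submatrix_succ {R : Type*} [Field R] {m : ℕ}
    (M : Matrix (Fin (m + 1)) (Fin (m + 1)) R) (hS : IsUnit (M.submatrix Fin.succ Fin.succ).det) :
    M.det / (M.submatrix Fin.succ Fin.succ).det
      = M 0 0 - (fun j => M 0 j.succ) ⬝ᵥ (M.submatrix Fin.succ Fin.succ)⁻¹ *ᵥ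
          fun i => M i.succ 0 := by
  set S := M.submatrix Fin.succ Fin.succ
  have := S.invertibleOfIsUnitDet hS
  let e : Fin (m + 1) ≃ Fin m ⊕ Unit := (finSuccEquiv m).trans (Equiv.optionEquivSumPUnit _)
  have hblocks : M.submatrix e.symm e.symm = fromBlocks S (of fun i _ => M i.succ 0)
      (of fun _ j => M 0 j.succ) (of fun _ _ => M 0 0) := by
    ext (i | _) (j | _) <;> simp [e, S]
  rw [← det_submatrix_equiv_self e.symm, hblocks, det_fromBlocks₁₁,
    mul_div_cancel_left₀ _ hS.ne_zero, det_unique]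
  simp only [sub_apply, of_apply, Matrix.mul_apply, invOf_eq_nonsing_inv, mulVec, dotProduct,
    Finset.sum_mul, Finset.mul_sum, mul_assoc]
  rw [Finset.sum_comm]

end Matrix

open ProbabilityTheory

section Covariance

variable {Ω : Type*} [MeasurableSpace Ω]

noncomputable def covarMatrix {ι : Type*} (μ : Measure Ω) (Z : ι → Ω → ℝ) : Matrix ι ι ℝ :=
  of fun i j => covar μ (Z i) (Z j)

variable {μ : Measure Ω}

lemma covar_eq_covariance (f g : Ω → ℝ) : covar μ f g = cov[f, g; μ] := rfl

lemma covar_comm (f g : Ω → ℝ) : covar μ f g = covar μ g f := covariance_comm f g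

lemma posSemidef_covarMatrix [IsFiniteMeasure μ] {ι : Type*} [Fintype ι] {Z : ι → Ω → ℝ}
    (hZ : ∀ i, MemLp (Z i) 2 μ) : (covarMatrix μ Z).PosSemidef := by
  refine .of_dotProduct_mulVec_nonneg (isHermitian_iff_isSymm.mpr ?_) fun x => ?_
  · ext i j
    exact covar_comm _ _
  · have hxZ : ∀ i, MemLp (fun ω => x i * Z i ω) 2 μ := fun i => (hZ i).const_mul (x i)
    have hquad : star x ⬝ᵥ covarMatrix μ Z *ᵥ x
        = cov[fun ω => ∑ i, x i * Z i ω, fun ω => ∑ i, x i * Z i ω; μ] := by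
      rw [covariance_fun_sum_fun_sum hxZ hxZ]
      simp only [covariance_const_mul_left, covariance_const_mul_right, covarMatrix, star_trivial,
        dotProduct, mulVec, of_apply, Finset.mul_sum, covar_eq_covariance]
      exact Finset.sum_congr rfl fun i _ => Finset.sum_congr rfl fun j _ => by ring
    rw [hquad]
    exact integral_nonneg fun ω => mul_self_nonneg _

lemma det_covarMatrix_cons_div_det (X : Ω → ℝ) {m : ℕ} (Z : Fin m → Ω → ℝ)
    (h : IsUnit (covarMatrix μ Z).det) :
    (covarMatrix μ (Fin.cons X Z)).det / (covarMatrix μ Z).det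
      = covar μ X X - (fun i => covar μ X (Z i)) ⬝ᵥ (covarMatrix μ Z)⁻¹ *ᵥ
          fun i => covar μ X (Z i) := by
  have hsub : (covarMatrix μ (Fin.cons X Z)).submatrix Fin.succ Fin.succ = covarMatrix μ Z := rfl
  have hschur := det_div_det_submatrix_succ (covarMatrix μ (Fin.cons X Z)) (hsub ▸ h)
  have hcol : (fun i => covar μ (Z i) X) = fun i => covar μ X (Z i) :=
    funext fun i => covar_comm _ _
  rw [hsub] at hschur
  rw [hschur]
  simp only [covarMatrix, of_apply, Fin.cons_zero, Fin.cons_succ]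
  rw [hcol]

end Covariance

theorem stmt9_general {Ω : Type*} [MeasurableSpace Ω] (μ : Measure Ω) [IsProbabilityMeasure μ]
    (n : ℕ) (X : Ω → ℝ) (Yp : Fin (n + 1) → Ω → ℝ)
    (hX : MemLp X 2 μ) (hYp : ∀ i, MemLp (Yp i) 2 μ)
    (Y : Fin n → Ω → ℝ) (hY : Y = fun i => Yp i.castSucc)
    (SXYp : Matrix (Fin (n + 2)) (Fin (n + 2)) ℝ)
    (hSXYp : SXYp = Matrix.of fun i j =>
      covar μ ((Fin.cons X Yp : Fin (n + 2) → Ω → ℝ) i) ((Fin.cons X Yp : Fin (n + 2) → Ω → ℝ) j))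
    (SYp : Matrix (Fin (n + 1)) (Fin (n + 1)) ℝ)
    (hSYp : SYp = Matrix.of fun i j => covar μ (Yp i) (Yp j))
    (SXY : Matrix (Fin (n + 1)) (Fin (n + 1)) ℝ)
    (hSXY : SXY = Matrix.of fun i j =>
      covar μ ((Fin.cons X Y : Fin (n + 1) → Ω → ℝ) i) ((Fin.cons X Y : Fin (n + 1) → Ω → ℝ) j))
    (SY : Matrix (Fin n) (Fin n) ℝ)
    (hSY : SY = Matrix.of fun i j => covar μ (Y i) (Y j))
    (hinvXYp : IsUnit SXYp.det) :
    SXYp.det / SYp.det ≤ SXY.det / SY.det ∧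
      (SXYp.det / SYp.det = SXY.det / SY.det ↔
        covar μ X (Yp (Fin.last n)) =
          (fun i => covar μ X (Y i)) ⬝ᵥ (SY⁻¹ *ᵥ fun i => covar μ (Y i) (Yp (Fin.last n)))) := by
  subst hY hSXYp hSYp hSXY hSY
  have hXYp : (covarMatrix μ (Fin.cons X Yp)).PosDef :=
    (posSemidef_covarMatrix (Fin.cases hX hYp)).posDef_iff_isUnit.mpr
      ((isUnit_iff_isUnit_det _).mpr hinvXYp)
  have hYp : (covarMatrix μ Yp).PosDef := hXYp.submatrix (Fin.succ_injective _)
  have hY : (covarMatrix μ fun i : Fin n => Yp i.castSucc).PosDef :=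
    hYp.submatrix (Fin.castSucc_injective _)
  have hratio_p := det_covarMatrix_cons_div_det X Yp hYp.isUnit_det
  have hratio := det_covarMatrix_cons_div_det X _ hY.isUnit_det
  unfold covarMatrix at hratio_p hratio
  rw [hratio_p, hratio]
  exact ⟨sub_le_sub_left (hYp.init_dotProduct_inv_mulVec_init_le _) _,
    sub_right_inj.trans (eq_comm.trans
      (hYp.init_dotProduct_inv_mulVec_init_eq_iff fun i => covar μ X (Yp i)))⟩

/-- Adding a moment constraint tightens the square-root bound:
`det Σ(X,Y⁺)/det Σ(Y⁺) ≤ det Σ(X,Y)/det Σ(Y)`, with equality iff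
`Cov(X,Y_d) = Cov(X,Y) Σ(Y)⁻¹ Cov(Y,Y_d)`. -/
theorem stmt9 {Ω : Type*} [MeasurableSpace Ω] (μ : Measure Ω) [IsProbabilityMeasure μ]
    (n : ℕ) (X : Ω → ℝ) (Yp : Fin (n + 1) → Ω → ℝ)
    (hX : MemLp X 2 μ) (hYp : ∀ i, MemLp (Yp i) 2 μ)
    (Y : Fin n → Ω → ℝ) (hY : Y = fun i => Yp i.castSucc)
    (SXYp : Matrix (Fin (n + 2)) (Fin (n + 2)) ℝ)
    (hSXYp : SXYp = Matrix.of fun i j =>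
      covar μ ((Fin.cons X Yp : Fin (n + 2) → Ω → ℝ) i) ((Fin.cons X Yp : Fin (n + 2) → Ω → ℝ) j))
    (SYp : Matrix (Fin (n + 1)) (Fin (n + 1)) ℝ)
    (hSYp : SYp = Matrix.of fun i j => covar μ (Yp i) (Yp j))
    (SXY : Matrix (Fin (n + 1)) (Fin (n + 1)) ℝ)
    (hSXY : SXY = Matrix.of fun i j =>
      covar μ ((Fin.cons X Y : Fin (n + 1) → Ω → ℝ) i) ((Fin.cons X Y : Fin (n + 1) → Ω → ℝ) j))
    (SY : Matrix (Fin n) (Fin n) ℝ)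
    (hSY : SY = Matrix.of fun i j => covar μ (Y i) (Y j))
    (hinvXYp : IsUnit SXYp.det) (hinvYp : IsUnit SYp.det)
    (hinvXY : IsUnit SXY.det) (hinvY : IsUnit SY.det) :
    SXYp.det / SYp.det ≤ SXY.det / SY.det ∧
      (SXYp.det / SYp.det = SXY.det / SY.det ↔
        covar μ X (Yp (Fin.last n)) =
          (fun i => covar μ X (Y i)) ⬝ᵥ (SY⁻¹ *ᵥ fun i => covar μ (Y i) (Yp (Fin.last n)))) :=
  stmt9_general μ n X Yp hX hYp Y hY SXYp hSXYp SYp hSYp SXY hSXY SY hSY hinvXYp
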